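/- arXiv:1601.00827 — 2 statements merged into one kernel-verified Lean document; each statement's English description precedes it below -/
import Mathlib

section
/- Let $U$ be an open subset of a Banach space $B$, let $\theta$ be a continuous 1-form on $U$ and $c > 0$ such that: (i) $\theta$ is exact on $U$, say $\theta = dF$ for $F: U \to \mathbb{R}$ of class $C^1$; (ii) $\bar q: [0,\varepsilon] \to U$ is an absolutely continuous curve with $\theta_{\bar q(t)}(\dot{\bar q}(t)) = c\, s(t)$ a.e., where $s(t) \ge 0$ is the speed of $\bar q$; (iii) for every absolutely continuous curve $q:[0,\varepsilon]\to U$ with speed $\sigma(t)$, $|\theta_{q(t)}(\dot q(t))| \le c\, \sigma(t)$ a.e. Then for any curve $q$ in $U$ with $q(0) = \bar q(0)$ and $q(\varepsilon) = \bar q(\varepsilon)$, the length of $\bar q$ is at most the length of $q$: $\int_0^\varepsilon s(t)\,dt \le \int_0^\varepsilon \sigma(t)\,dt$. -/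
open MeasureTheory

private lemma key_15 {B : Type*} [NormedAddCommGroup B] [NormedSpace ℝ B]
    (U : Set B) (θ : B → B →L[ℝ] ℝ) (hθcont : ContinuousOn θ U)
    (c : ℝ) (ε : ℝ) (hε : 0 < ε)
    (F : B → ℝ) (hF : ∀ x ∈ U, HasFDerivAt F (θ x) x)
    (hbound : ∀ x ∈ U, ∀ v : B, |θ x v| ≤ c * ‖v‖)
    (q q' : ℝ → B)
    (hq : ∀ t ∈ Set.Icc (0 : ℝ) ε, HasDerivAt q (q' t) t)
    (hqU : ∀ t ∈ Set.Icc (0 : ℝ) ε, q t ∈ U)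
    (hint : IntervalIntegrable (fun t => ‖q' t‖) volume 0 ε) :
    IntervalIntegrable (fun t => θ (q t) (q' t)) volume 0 ε ∧
      F (q ε) - F (q 0) = ∫ t in (0 : ℝ)..ε, θ (q t) (q' t) := by
  have hcomp : ∀ t ∈ Set.Icc (0 : ℝ) ε, HasDerivAt (F ∘ q) (θ (q t) (q' t)) t :=
    fun t ht => (hF (q t) (hqU t ht)).comp_hasDerivAt t (hq t ht)
  have h3 : AEStronglyMeasurable (deriv (F ∘ q)) (volume.restrict (Set.Ioc 0 ε)) :=
    (stronglyMeasurable_deriv (F ∘ q)).aestronglyMeasurable.restrict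
  have h4 : AEStronglyMeasurable (fun t => θ (q t) (q' t))
      (volume.restrict (Set.Ioc 0 ε)) := by
    refine h3.congr ?_
    filter_upwards [ae_restrict_mem measurableSet_Ioc] with t ht
    exact (hcomp t (Set.Ioc_subset_Icc_self ht)).deriv
  have hboundint : IntegrableOn (fun t => c * ‖q' t‖) (Set.Ioc 0 ε) volume := by
    have := hint.const_mul c
    rwa [intervalIntegrable_iff_integrableOn_Ioc_of_le hε.le] at this
  have hInt : IntegrableOn (fun t => θ (q t) (q' t)) (Set.Ioc 0 ε) volume := by
    refine hboundint.mono' h4 ?_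
    filter_upwards [ae_restrict_mem measurableSet_Ioc] with t ht
    exact hbound (q t) (hqU t (Set.Ioc_subset_Icc_self ht)) (q' t)
  have hII : IntervalIntegrable (fun t => θ (q t) (q' t)) volume 0 ε := by
    rwa [intervalIntegrable_iff_integrableOn_Ioc_of_le hε.le]
  refine ⟨hII, ?_⟩
  refine (intervalIntegral.integral_eq_sub_of_hasDerivAt (f := F ∘ q) ?_ hII).symm
  intro t ht
  rw [Set.uIcc_of_le hε.le] at ht
  exact hcomp t ht

theorem stmt_15 {B : Type*} [NormedAddCommGroup B] [NormedSpace ℝ B]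
    (U : Set B) (hU : IsOpen U)
    (θ : B → B →L[ℝ] ℝ) (hθcont : ContinuousOn θ U)
    (c : ℝ) (hc : 0 < c) (ε : ℝ) (hε : 0 < ε)
    -- (i) θ is exact on U
    (F : B → ℝ) (hF : ∀ x ∈ U, HasFDerivAt F (θ x) x)
    -- (iii) θ is bounded by c times the norm
    (hbound : ∀ x ∈ U, ∀ v : B, |θ x v| ≤ c * ‖v‖)
    -- the calibrated curve q̄
    (qbar qbar' : ℝ → B)
    (hqbar : ∀ t ∈ Set.Icc (0 : ℝ) ε, HasDerivAt qbar (qbar' t) t)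
    (hqbarU : ∀ t ∈ Set.Icc (0 : ℝ) ε, qbar t ∈ U)
    (hqbarInt : IntervalIntegrable (fun t => ‖qbar' t‖) volume 0 ε)
    -- (ii) θ calibrates q̄
    (hcal : ∀ t ∈ Set.Icc (0 : ℝ) ε, θ (qbar t) (qbar' t) = c * ‖qbar' t‖) :
    -- conclusion: q̄ minimizes length among curves in U with the same endpoints
    ∀ q q' : ℝ → B,
      (∀ t ∈ Set.Icc (0 : ℝ) ε, HasDerivAt q (q' t) t) →
      (∀ t ∈ Set.Icc (0 : ℝ) ε, q t ∈ U) →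
      IntervalIntegrable (fun t => ‖q' t‖) volume 0 ε →
      q 0 = qbar 0 → q ε = qbar ε →
      (∫ t in (0 : ℝ)..ε, ‖qbar' t‖) ≤ ∫ t in (0 : ℝ)..ε, ‖q' t‖ := by
  intro q q' hq hqU hint h0 hε'
  obtain ⟨hIIbar, hFTCbar⟩ := key_15 U θ hθcont c ε hε F hF hbound qbar qbar'
    hqbar hqbarU hqbarInt
  obtain ⟨hII, hFTC⟩ := key_15 U θ hθcont c ε hε F hF hbound q q' hq hqU hint
  have h1 : c * ∫ t in (0:ℝ)..ε, ‖qbar' t‖ = ∫ t in (0:ℝ)..ε, θ (qbar t) (qbar' t) := by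
    rw [← intervalIntegral.integral_const_mul]
    refine (intervalIntegral.integral_congr ?_).symm
    intro t ht
    rw [Set.uIcc_of_le hε.le] at ht
    exact hcal t ht
  have h2 : ∫ t in (0:ℝ)..ε, θ (q t) (q' t) ≤ ∫ t in (0:ℝ)..ε, c * ‖q' t‖ := by
    refine intervalIntegral.integral_mono_on hε.le hII (hint.const_mul c) ?_
    intro t ht
    exact le_of_abs_le (hbound (q t) (hqU t ht) (q' t))
  have h3 : ∫ t in (0:ℝ)..ε, θ (qbar t) (qbar' t) = ∫ t in (0:ℝ)..ε, θ (q t) (q' t) := by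
    rw [← hFTCbar, ← hFTC, h0, hε']
  have h4 : c * (∫ t in (0:ℝ)..ε, ‖qbar' t‖) ≤ c * ∫ t in (0:ℝ)..ε, ‖q' t‖ := by
    rw [h1, h3]
    calc ∫ t in (0:ℝ)..ε, θ (q t) (q' t) ≤ ∫ t in (0:ℝ)..ε, c * ‖q' t‖ := h2
      _ = c * ∫ t in (0:ℝ)..ε, ‖q' t‖ := intervalIntegral.integral_const_mul c _
  exact le_of_mul_le_mul_left h4 hc
end

section
/- In the $\ell^2$-product of Heisenberg groups $M = \ell^2(\mathbb{N},\mathbb{R}^3)$ with horizontal fields $X_n = \partial_{x_n} - (y_n/2)\partial_{z_n}$, $Y_n = \partial_{y_n} + (x_n/2)\partial_{z_n}$, for any two horizontal vector fields $X = \sum_n a_n X_n$, $Y = \sum_n b_n Y_n$ with constant coefficient sequences $a, b \in \ell^2(\mathbb{N},\mathbb{R})$, the Lie bracket is $[X, Y] = \sum_n a_n b_n \partial_{z_n}$, whose coefficient sequence $(a_n b_n)_n$ lies in $\ell^1(\mathbb{N},\mathbb{R}) \subsetneq \ell^2(\mathbb{N},\mathbb{R})$. -/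
/-!
Each coordinate of `X` and `Y` is affine in the corresponding coordinate of `q`, so the
derivatives are computed coordinatewise: `DX(q)v = ∑ -(aₙ/2) yₙ(v) ∂zₙ` and
`DY(q)v = ∑ (bₙ/2) xₙ(v) ∂zₙ`. Evaluating at `v = Y q` and `v = X q` gives
`[X, Y] = ∑ aₙ bₙ ∂zₙ`. Hölder's inequality for two `ℓ²` sequences puts `(aₙ bₙ)` in `ℓ¹`;
`ℓ¹ ⊆ ℓ²` by monotonicity of `ℓᵖ` in `p`, and the harmonic sequence `1/n` is square-summable
but not summable.
-/

/-- The `ℓ²`-product of Heisenberg groups, `M = ℓ²(ℕ, ℝ³)`,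
with coordinates `(xₙ, yₙ, zₙ)ₙ`. -/
abbrev M18 : Type := lp (fun _ : ℕ => ℝ × ℝ × ℝ) 2

/-- Lie bracket of vector fields on `M18`: `[V,W](q) = DW(q)V(q) - DV(q)W(q)`. -/
noncomputable def lieBracket18 (V W : M18 → M18) (q : M18) : M18 :=
  fderiv ℝ W q (V q) - fderiv ℝ V q (W q)

open scoped ENNReal

namespace lp

variable {𝕜 α : Type*} [NontriviallyNormedField 𝕜] {E : α → Type*}
  [∀ i, NormedAddCommGroup (E i)] [∀ i, NormedSpace 𝕜 (E i)] {p : ℝ≥0∞} [Fact (1 ≤ p)]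

@[simp]
theorem evalCLM_apply (i : α) (f : lp E p) : evalCLM 𝕜 E p i f = f i := rfl

theorem hasFDerivAt_apply (i : α) (f : lp E p) :
    HasFDerivAt (fun g : lp E p => g i) (evalCLM 𝕜 E p i) f :=
  (evalCLM 𝕜 E p i).hasFDerivAt

theorem fderiv_apply {F : Type*} [NormedAddCommGroup F] [NormedSpace 𝕜 F] {f : F → lp E p}
    {x : F} (hf : DifferentiableAt 𝕜 f x) (i : α) (v : F) :
    fderiv 𝕜 f x v i = fderiv 𝕜 (fun y => f y i) x v :=
  (congrArg (· v) ((hasFDerivAt_apply i (f x)).comp x hf.hasFDerivAt).fderiv).symm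

end lp

theorem fderiv_apply_of_apply_eq_affine {ι : Type*} {p : ℝ≥0∞} [Fact (1 ≤ p)] {F : lp (fun _ : ι => ℝ × ℝ × ℝ) p →
    lp (fun _ : ι => ℝ × ℝ × ℝ) p} (hF : Differentiable ℝ F) {c₁ c₂ α β : ι → ℝ}
    (hF_apply : ∀ q n, F q n = (c₁ n, c₂ n, α n * (q n).1 + β n * (q n).2.1))
    (q v : lp (fun _ : ι => ℝ × ℝ × ℝ) p) (n : ι) :
    fderiv ℝ F q v n = (0, 0, α n * (v n).1 + β n * (v n).2.1) := by
  simp_rw [lp.fderiv_apply (hF q), hF_apply]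
  have hz := ((lp.hasFDerivAt_apply (𝕜 := ℝ) n q).fst.const_mul (α n)).fun_add
    ((lp.hasFDerivAt_apply (𝕜 := ℝ) n q).snd.fst.const_mul (β n))
  rw [((hasFDerivAt_const (c₁ n) q).prodMk ((hasFDerivAt_const (c₂ n) q).prodMk hz)).fderiv]
  simp

theorem summable_abs_mul_of_memℓp_two {ι : Type*} (a b : lp (fun _ : ι => ℝ) 2) :
    Summable fun i => |a i * b i| := by
  simpa [abs_mul] using lp.summable_mul (by simpa using Real.HolderConjugate.two_two) a b

theorem summable_sq_of_summable_abs {ι : Type*} {s : ι → ℝ} (hs : Summable fun i => |s i|) :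
    Summable fun i => s i ^ 2 := by
  have hs₁ : Memℓp s 1 := memℓp_gen (by simpa using hs)
  simpa using (memℓp_gen_iff (p := 2) (by norm_num)).1 (hs₁.of_exponent_ge one_le_two)

theorem exists_summable_sq_not_summable_abs :
    ∃ s : ℕ → ℝ, Summable (fun n => s n ^ 2) ∧ ¬ Summable (fun n => |s n|) :=
  ⟨fun n => (n : ℝ)⁻¹, by simp only [inv_pow]; exact Real.summable_nat_pow_inv.2 one_lt_two,
    by simp only [abs_inv, Nat.abs_cast]; exact Real.not_summable_natCast_inv⟩

theorem stmt_18 (a b : lp (fun _ : ℕ => ℝ) 2) (X Y : M18 → M18)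
    -- X = ∑ aₙ Xₙ, where Xₙ = ∂xₙ - (yₙ/2) ∂zₙ
    (hX : ∀ (q : M18) (n : ℕ), (X q) n = (a n, 0, -(a n) * (q n).2.1 / 2))
    -- Y = ∑ bₙ Yₙ, where Yₙ = ∂yₙ + (xₙ/2) ∂zₙ
    (hY : ∀ (q : M18) (n : ℕ), (Y q) n = (0, b n, (b n) * (q n).1 / 2))
    (hXd : Differentiable ℝ X) (hYd : Differentiable ℝ Y) :
    -- the bracket is [X,Y] = ∑ aₙ bₙ ∂zₙ …
    (∀ (q : M18) (n : ℕ), (lieBracket18 X Y q) n = (0, 0, a n * b n)) ∧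
    -- … whose coefficient sequence lies in ℓ¹ …
    Summable (fun n => |a n * b n|) ∧
    -- … which is a proper subspace of ℓ²: every ℓ¹ sequence is ℓ², not conversely
    (∀ s : ℕ → ℝ, Summable (fun n => |s n|) → Summable (fun n => (s n) ^ 2)) ∧
    ∃ s : ℕ → ℝ, Summable (fun n => (s n) ^ 2) ∧ ¬ Summable (fun n => |s n|) := by
  refine ⟨fun q n => ?_, summable_abs_mul_of_memℓp_two a b, fun s => summable_sq_of_summable_abs,
    exists_summable_sq_not_summable_abs⟩
  have hDX := fderiv_apply_of_apply_eq_affine hXd (c₁ := a) (c₂ := 0) (α := 0)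
    (β := fun n => -(a n) / 2) (fun q n => by rw [hX]; congr 2; simp only [Pi.zero_apply]; ring)
  have hDY := fderiv_apply_of_apply_eq_affine hYd (c₁ := 0) (c₂ := b) (α := fun n => b n / 2)
    (β := 0) (fun q n => by rw [hY]; congr 2; simp only [Pi.zero_apply]; ring)
  rw [lieBracket18, lp.coeFn_sub, Pi.sub_apply, hDX, hDY, hX, hY]
  ext <;> simp only [Prod.fst_sub, Prod.snd_sub, Pi.zero_apply] <;> ring
end
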